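/- The function max : ℕ² → ℕ, (x_1, x_2) ↦ max(x_1, x_2), is not obliviously-computable: no output-oblivious CRN (even with an initial leader) stably computes it. -/

import Mathlib

/-- A chemical reaction network with species type `σ`, designated input species
`inputs i` for each of the `d` inputs, an output species, and a leader species. -/
structure CRN (d : ℕ) (σ : Type) [Fintype σ] [DecidableEq σ] where
  /-- Each reaction is a pair `(r, p)` of reactant counts and product counts. -/
  reactions : Finset ((σ → ℕ) × (σ → ℕ))
  inputs : Fin d → σ
  output : σ
  leader : σ
  inputs_inj : Function.Injective inputs
  leader_not_input : ∀ i, inputs i ≠ leader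

namespace CRN

variable {d : ℕ} {σ : Type} [Fintype σ] [DecidableEq σ]

/-- One reaction step: some reaction `(r, p)` with `r ≤ c` pointwise fires,
yielding `c - r + p`. -/
def Step (C : CRN d σ) (c c' : σ → ℕ) : Prop :=
  ∃ rp ∈ C.reactions, rp.1 ≤ c ∧ c' = c - rp.1 + rp.2

/-- Reachability by a finite sequence of reaction steps. -/
def Reachable (C : CRN d σ) : (σ → ℕ) → (σ → ℕ) → Prop :=
  Relation.ReflTransGen C.Step

/-- The initial configuration encoding input `x`: count `x i` of input species
`inputs i`, count 1 of the leader, count 0 of everything else. -/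
def init (C : CRN d σ) (x : Fin d → ℕ) : σ → ℕ :=
  fun s => (∑ i, if C.inputs i = s then x i else 0) + (if s = C.leader then 1 else 0)

/-- A configuration is stable if the output count never changes from it. -/
def Stable (C : CRN d σ) (c : σ → ℕ) : Prop :=
  ∀ c', C.Reachable c c' → c' C.output = c C.output

/-- `C` stably computes `f` if from every configuration reachable from an initial
configuration, a stable configuration with correct output count is reachable. -/
def StablyComputes (C : CRN d σ) (f : (Fin d → ℕ) → ℕ) : Prop :=
  ∀ x c, C.Reachable (C.init x) c →
    ∃ o, C.Reachable c o ∧ C.Stable o ∧ o C.output = f x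

/-- A CRN is output-oblivious if the output species is never a reactant. -/
def OutputOblivious (C : CRN d σ) : Prop :=
  ∀ rp ∈ C.reactions, rp.1 C.output = 0

/-- A CRN is output-monotonic if no reaction decreases the output species count. -/
def OutputMonotonic (C : CRN d σ) : Prop :=
  ∀ rp ∈ C.reactions, rp.1 C.output ≤ rp.2 C.output

end CRN

/-- `f` is obliviously-computable if some output-oblivious CRN stably computes it. -/
def ObliviouslyComputable {d : ℕ} (f : (Fin d → ℕ) → ℕ) : Prop :=
  ∃ (n : ℕ) (C : CRN d (Fin n)), C.OutputOblivious ∧ C.StablyComputes f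

/-!
Output-obliviousness makes the output count monotone along every execution. Run the CRN on
inputs `(n, 0)` until it has produced `n` output molecules; by Dickson's lemma two of these
configurations satisfy `c m ≤ c n` with `m < n`. Adding `n` molecules of `X₂` to both, the run
from `(m, n)` still has to reach a stable configuration `o` with output `max m n = n`, and the
same reactions, fired in the presence of the surplus `c n - c m`, take the run from `(n, n)` to
`o + (c n - c m)`, which already carries `2n - m > max n n` output molecules.
-/

namespace CRN

variable {d : ℕ} {σ : Type} [Fintype σ] [DecidableEq σ] {C : CRN d σ}

def inputConfig (C : CRN d σ) (y : Fin d → ℕ) : σ → ℕ :=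
  fun s => ∑ i, if C.inputs i = s then y i else 0

theorem init_add (x y : Fin d → ℕ) : C.init (x + y) = C.init x + C.inputConfig y := by
  funext s
  simp only [init, inputConfig, Pi.add_apply, ite_add_zero, Finset.sum_add_distrib]
  ring

theorem Step.add_right {c c' : σ → ℕ} (h : C.Step c c') (e : σ → ℕ) :
    C.Step (c + e) (c' + e) := by
  obtain ⟨rp, hrp, hle, rfl⟩ := h
  refine ⟨rp, hrp, hle.trans le_self_add, ?_⟩
  funext s
  have : rp.1 s ≤ c s := hle s
  simp only [Pi.add_apply, Pi.sub_apply]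
  omega

theorem Reachable.add_right {c c' : σ → ℕ} (h : C.Reachable c c') (e : σ → ℕ) :
    C.Reachable (c + e) (c' + e) :=
  Relation.ReflTransGen.lift (· + e) (fun _ _ hs => hs.add_right e) _ _ h

theorem OutputOblivious.outputMonotonic (h : C.OutputOblivious) : C.OutputMonotonic :=
  fun rp hrp => (h rp hrp).trans_le (Nat.zero_le _)

theorem Reachable.output_mono (hC : C.OutputMonotonic) {c c' : σ → ℕ}
    (h : C.Reachable c c') : c C.output ≤ c' C.output := by
  induction h with
  | refl => exact le_rfl
  | tail _ hstep ih =>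
    obtain ⟨rp, hrp, hle, rfl⟩ := hstep
    have := hC rp hrp
    have := hle C.output
    simp only [Pi.add_apply, Pi.sub_apply]
    omega

theorem StablyComputes.exists_reachable_output_eq {f : (Fin d → ℕ) → ℕ}
    (hf : C.StablyComputes f) (x : Fin d → ℕ) :
    ∃ c, C.Reachable (C.init x) c ∧ c C.output = f x := by
  obtain ⟨o, ho, -, hoY⟩ := hf x _ Relation.ReflTransGen.refl
  exact ⟨o, ho, hoY⟩

theorem StablyComputes.add_sub_le {f : (Fin d → ℕ) → ℕ} (hf : C.StablyComputes f)
    (hC : C.OutputMonotonic) {x x' : Fin d → ℕ} {c c' : σ → ℕ}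
    (hc : C.Reachable (C.init x) c) (hc' : C.Reachable (C.init x') c') (hle : c ≤ c')
    (y : Fin d → ℕ) :
    f (x + y) + (c' C.output - c C.output) ≤ f (x' + y) := by
  set w := C.inputConfig y
  set e := c' - c
  obtain ⟨o, hco, -, hoY⟩ := hf (x + y) (c + w) (by rw [init_add]; exact hc.add_right w)
  have hc'_eq : c' + w = c + w + e := by
    funext s
    have : c s ≤ c' s := hle s
    simp only [e, Pi.add_apply, Pi.sub_apply]
    omega
  have hreach : C.Reachable (C.init (x' + y)) (o + e) := by
    rw [init_add]
    exact (hc'.add_right w).trans (hc'_eq ▸ hco.add_right e)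
  obtain ⟨o', hoo', -, ho'Y⟩ := hf (x' + y) _ hreach
  calc f (x + y) + (c' C.output - c C.output) = (o + e) C.output := by
        simp only [Pi.add_apply, Pi.sub_apply, e, hoY]
    _ ≤ o' C.output := hoo'.output_mono hC
    _ = f (x' + y) := ho'Y

end CRN

/-- `max : ℕ² → ℕ` is not obliviously-computable: no output-oblivious CRN (even
with an initial leader) stably computes it. -/
theorem max_not_obliviouslyComputable :
    ¬ ObliviouslyComputable (fun x : Fin 2 → ℕ => max (x 0) (x 1)) := by
  rintro ⟨k, C, hob, hf⟩
  choose c hc hcY using fun n : ℕ => hf.exists_reachable_output_eq ![n, 0]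
  obtain ⟨m, n, hmn, hle⟩ := wellQuasiOrdered_le c
  have h := hf.add_sub_le hob.outputMonotonic (hc m) (hc n) hle ![0, n]
  simp only [hcY, Pi.add_apply, Matrix.cons_val_zero, Matrix.cons_val_one] at h
  omega
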